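/- If p is a prime with p ≡ 3 (mod 4), then ∑_{j=1}^{p-1} r_2(j)·(σ*(p-j) - 4σ*((p-j)/2)) = -p - 1. -/

import Mathlib

/-- σ(n) = sum of divisors of n (0 if n = 0). -/
def sigma1 (n : ℕ) : ℤ := ∑ d ∈ n.divisors, (d : ℤ)

/-- σ(n/m), interpreted as 0 when m does not divide n. -/
def sigmaDiv (n m : ℕ) : ℤ := if m ∣ n then sigma1 (n / m) else 0

/-- σ*(n) = sum of divisors d of n with n/d odd. -/
def sigmaStar (n : ℕ) : ℤ := ∑ d ∈ n.divisors.filter (fun d => Odd (n / d)), (d : ℤ)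

/-- σ*(n/m), interpreted as 0 when m does not divide n. -/
def sigmaStarDiv (n m : ℕ) : ℤ := if m ∣ n then sigmaStar (n / m) else 0

/-- Number of representations of n as an ordered sum of k squares of integers. -/
noncomputable def rSq (k n : ℕ) : ℕ := Nat.card {x : Fin k → ℤ // ∑ i, (x i) ^ 2 = (n : ℤ)}
/-!
Write `ε(a) = (-1)^a`. Since `σ*(m) - 4σ*(m/2) = -∑_{ab = m, b odd} ε(a) a`, the sum over
`0 ≤ j ≤ n` equals `-∑ ε(a) a` over the solutions of `x² + y² + ab = n` with `a, b > 0`, `b` odd.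
Split `ε(a) a = ε(a) (a - x) + ε(a) x`. The second part cancels under `x ↦ -x`. The first is
negated by a Zagier-type involution of `(x, a, b)` preserving `x² + ab`; its case boundaries
`b = 4(a - x)` and `a = 2x + b` are never reached, since `b` is odd and `n = y² + (x + b)²` is
impossible when `n` is not a sum of two squares. For a prime `p ≡ 3 (mod 4)` the term `j = 0`
is `σ*(p) = p + 1` and the term `j = p` vanishes.
-/

open Finset

lemma Finset.sum_eq_zero_of_involution_neg {ι G : Type*} [AddCommGroup G] [IsAddTorsionFree G]
    {s : Finset ι} {f : ι → G} (g : ι → ι) (hmem : ∀ a ∈ s, g a ∈ s)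
    (hinv : ∀ a ∈ s, g (g a) = a) (hneg : ∀ a ∈ s, f (g a) = -f a) : ∑ a ∈ s, f a = 0 :=
  sum_involution (fun a _ ↦ g a) (fun a ha ↦ by rw [hneg a ha, add_neg_cancel])
    (fun a ha hne hfix ↦ hne (self_eq_neg.1 (by simpa [hfix] using hneg a ha))) hmem hinv

lemma Int.negOnePow_eq_neg_of_odd_sub {m n : ℤ} (h : Odd (m - n)) :
    m.negOnePow = -n.negOnePow := by
  rw [← sub_add_cancel m n, Int.negOnePow_add, Int.negOnePow_odd _ h, neg_one_mul]

lemma Int.sq_add_sq_ne_of_emod_four_eq_three {n : ℤ} (hn : n % 4 = 3) (x y : ℤ) :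
    x ^ 2 + y ^ 2 ≠ n := by
  intro h
  have key : ∀ u v : ZMod 4, u ^ 2 + v ^ 2 ≠ 3 := by decide
  have : ((x ^ 2 + y ^ 2 : ℤ) : ZMod 4) = 3 := by
    rw [h, ← ZMod.intCast_mod, Nat.cast_ofNat, hn]; rfl
  exact key x y (by exact_mod_cast this)

def oddCofactorPairs (m : ℕ) : Finset (ℤ × ℤ) :=
  {d ∈ m.divisorsAntidiagonal | Odd d.2}.map (Nat.castEmbedding.prodMap Nat.castEmbedding)

lemma mem_oddCofactorPairs {m : ℕ} {a b : ℤ} :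
    (a, b) ∈ oddCofactorPairs m ↔ 0 < a ∧ 0 < b ∧ a * b = m ∧ Odd b := by
  simp only [oddCofactorPairs, mem_map, mem_filter, Nat.mem_divisorsAntidiagonal,
    Function.Embedding.prodMap, Nat.castEmbedding, Prod.exists, Prod.map, Prod.mk.injEq,
    Function.Embedding.coeFn_mk]
  constructor
  · rintro ⟨a, b, ⟨⟨hab, hm⟩, hb⟩, rfl, rfl⟩
    have ha0 : a ≠ 0 := by rintro rfl; simp_all
    have hb0 : b ≠ 0 := by rintro rfl; simp_all
    exact ⟨by exact_mod_cast Nat.pos_of_ne_zero ha0, by exact_mod_cast Nat.pos_of_ne_zero hb0,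
      by exact_mod_cast hab, by exact_mod_cast hb⟩
  · rintro ⟨ha, hb, hab, hodd⟩
    lift a to ℕ using ha.le
    lift b to ℕ using hb.le
    have hab' : a * b = m := by exact_mod_cast hab
    have hm : m ≠ 0 := by rw [← hab']; exact mul_ne_zero (by omega) (by omega)
    exact ⟨a, b, ⟨⟨hab', hm⟩, by exact_mod_cast hodd⟩, rfl, rfl⟩

lemma sigmaStar_eq_sum_oddCofactorPairs (m : ℕ) :
    sigmaStar m = ∑ w ∈ oddCofactorPairs m, w.1 := by
  rw [oddCofactorPairs, sum_map, sum_filter, sigmaStar, sum_filter]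
  exact (Nat.sum_divisorsAntidiagonal (fun a b ↦ if Odd b then (a : ℤ) else 0)).symm

lemma even_of_mem_oddCofactorPairs_two_mul {k : ℕ} {a b : ℤ}
    (h : (a, b) ∈ oddCofactorPairs (2 * k)) : Even a := by
  obtain ⟨-, -, hab, hb⟩ := mem_oddCofactorPairs.1 h
  have : Even (a * b) := ⟨k, by rw [hab]; push_cast; ring⟩
  exact (Int.even_mul.1 this).resolve_right (Int.not_even_iff_odd.2 hb)

lemma oddCofactorPairs_two_mul (k : ℕ) :
    oddCofactorPairs (2 * k) = (oddCofactorPairs k).image fun w ↦ (2 * w.1, w.2) := by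
  ext ⟨a, b⟩
  simp only [mem_image, Prod.exists, Prod.mk.injEq]
  constructor
  · intro h
    obtain ⟨c, rfl⟩ := even_of_mem_oddCofactorPairs_two_mul h
    obtain ⟨hc, hb, hcb, hodd⟩ := mem_oddCofactorPairs.1 h
    refine ⟨c, b, mem_oddCofactorPairs.2 ⟨by omega, hb, ?_, hodd⟩, by ring, rfl⟩
    push_cast at hcb
    linarith
  · rintro ⟨c, b, h, rfl, rfl⟩
    obtain ⟨hc, hb, hcb, hodd⟩ := mem_oddCofactorPairs.1 h
    exact mem_oddCofactorPairs.2 ⟨by omega, hb, by push_cast; rw [← hcb]; ring, hodd⟩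

lemma sigmaStar_two_mul (k : ℕ) : sigmaStar (2 * k) = 2 * sigmaStar k := by
  rw [sigmaStar_eq_sum_oddCofactorPairs, oddCofactorPairs_two_mul, sum_image, ← mul_sum,
    sigmaStar_eq_sum_oddCofactorPairs]
  intro v _ w _ h
  simp only [Prod.mk.injEq] at h
  exact Prod.ext (by omega) h.2

lemma sigmaStar_sub_four_mul_sigmaStarDiv_two (m : ℕ) :
    sigmaStar m - 4 * sigmaStarDiv m 2 =
      -∑ w ∈ oddCofactorPairs m, (w.1.negOnePow : ℤ) * w.1 := by
  obtain ⟨k, rfl | rfl⟩ := Nat.even_or_odd' m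
  · have hsum : ∑ w ∈ oddCofactorPairs (2 * k), (w.1.negOnePow : ℤ) * w.1 =
        sigmaStar (2 * k) := by
      rw [sigmaStar_eq_sum_oddCofactorPairs]
      refine sum_congr rfl fun ⟨a, b⟩ h ↦ ?_
      rw [Int.negOnePow_even _ (even_of_mem_oddCofactorPairs_two_mul h), Units.val_one, one_mul]
    rw [hsum, sigmaStarDiv, if_pos (dvd_mul_right 2 k), Nat.mul_div_cancel_left k two_pos,
      sigmaStar_two_mul]
    ring
  · have hsum : ∑ w ∈ oddCofactorPairs (2 * k + 1), (w.1.negOnePow : ℤ) * w.1 =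
        -sigmaStar (2 * k + 1) := by
      rw [sigmaStar_eq_sum_oddCofactorPairs, ← sum_neg_distrib]
      refine sum_congr rfl fun ⟨a, b⟩ h ↦ ?_
      obtain ⟨-, -, hab, -⟩ := mem_oddCofactorPairs.1 h
      have hodd : Odd (a * b) := by rw [hab]; push_cast; exact odd_two_mul_add_one (k : ℤ)
      have ha : Odd a := (Int.odd_mul.1 hodd).1
      rw [Int.negOnePow_odd _ ha, Units.val_neg, Units.val_one, neg_one_mul]
    rw [hsum, sigmaStarDiv, if_neg (by omega)]
    ring

noncomputable def sqSumReps (j : ℕ) : Finset (ℤ × ℤ) :=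
  {z ∈ Icc (-j : ℤ) j ×ˢ Icc (-j : ℤ) j | z.1 ^ 2 + z.2 ^ 2 = j}

lemma mem_sqSumReps {j : ℕ} {z : ℤ × ℤ} : z ∈ sqSumReps j ↔ z.1 ^ 2 + z.2 ^ 2 = j := by
  simp only [sqSumReps, mem_filter, mem_product, mem_Icc, and_iff_right_iff_imp]
  intro h
  refine ⟨⟨?_, ?_⟩, ?_, ?_⟩ <;> nlinarith [Int.le_self_sq z.1, Int.le_self_sq (-z.1),
    Int.le_self_sq z.2, Int.le_self_sq (-z.2), sq_nonneg z.1, sq_nonneg z.2]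

lemma rSq_two_eq_card (j : ℕ) : rSq 2 j = #(sqSumReps j) := by
  rw [rSq, ← Nat.card_eq_finsetCard]
  exact Nat.card_congr <| (finTwoArrowEquiv ℤ).subtypeEquiv fun v ↦ by
    simp [Fin.sum_univ_two, mem_sqSumReps]

noncomputable def quadReps (n : ℕ) : Finset ((ℤ × ℤ) × (ℤ × ℤ)) :=
  (range (n + 1)).biUnion fun j ↦ sqSumReps j ×ˢ oddCofactorPairs (n - j)

lemma mem_quadReps {n : ℕ} {x y a b : ℤ} :
    ((x, y), (a, b)) ∈ quadReps n ↔ x ^ 2 + y ^ 2 + a * b = n ∧ 0 < a ∧ 0 < b ∧ Odd b := by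
  simp only [quadReps, mem_biUnion, mem_range, mem_product, mem_sqSumReps,
    mem_oddCofactorPairs]
  constructor
  · rintro ⟨j, hj, hxy, ha, hb, hab, hodd⟩
    refine ⟨?_, ha, hb, hodd⟩
    rw [hxy, hab, Nat.cast_sub (by omega)]
    ring
  · rintro ⟨h, ha, hb, hodd⟩
    have hab : 0 < a * b := mul_pos ha hb
    lift x ^ 2 + y ^ 2 to ℕ using by positivity with j hj
    refine ⟨j, by omega, rfl, ha, hb, ?_, hodd⟩
    rw [Nat.cast_sub (by omega)]
    linarith

lemma sum_quadReps (n : ℕ) (f : ℤ × ℤ → ℤ) :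
    ∑ q ∈ quadReps n, f q.2 =
      ∑ j ∈ range (n + 1), (rSq 2 j : ℤ) * ∑ w ∈ oddCofactorPairs (n - j), f w := by
  rw [quadReps, sum_biUnion]
  · refine sum_congr rfl fun j _ ↦ ?_
    simp only [sum_product, sum_const, rSq_two_eq_card, nsmul_eq_mul]
  · intro i _ j _ hij
    refine disjoint_left.2 fun _ hi hj ↦ hij ?_
    rw [mem_product, mem_sqSumReps] at hi hj
    exact_mod_cast hi.1.symm.trans hj.1

def zagierMap : (ℤ × ℤ) × (ℤ × ℤ) → (ℤ × ℤ) × (ℤ × ℤ)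
  | ((x, y), (a, b)) =>
    if 2 * x + b < a then ((-x - b, y), (a - 2 * x - b, b))
    else if 4 * (a - x) < b then ((2 * a - x, y), (a, b + 4 * (x - a)))
    else ((b + 3 * x - 2 * a, y), (b + 2 * x - a, 4 * (a - x) - b))

section zagierMap

variable {n : ℕ} {x y a b : ℤ}

lemma zagierMap_mem_quadReps (hn : ∀ u v : ℤ, u ^ 2 + v ^ 2 ≠ n)
    (hq : ((x, y), (a, b)) ∈ quadReps n) : zagierMap ((x, y), (a, b)) ∈ quadReps n := by
  obtain ⟨h, ha, hb, hodd⟩ := mem_quadReps.1 hq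
  have hab : a ≠ 2 * x + b := fun hab ↦ hn y (x + b) (by rw [← h, hab]; ring)
  rw [Int.odd_iff] at hodd
  simp only [zagierMap]
  split_ifs <;> refine mem_quadReps.2 ⟨by linear_combination h, by omega, by omega, ?_⟩ <;>
    rw [Int.odd_iff] <;> omega

lemma zagierMap_zagierMap (ha : 0 < a) (hb : 0 < b) :
    zagierMap (zagierMap ((x, y), (a, b))) = ((x, y), (a, b)) := by
  simp only [zagierMap]
  split_ifs <;> simp only [Prod.mk.injEq, and_true, true_and] at * <;> omega

lemma negOnePow_mul_sub_zagierMap (hb : Odd b) :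
    ((zagierMap ((x, y), (a, b))).2.1.negOnePow : ℤ) *
        ((zagierMap ((x, y), (a, b))).2.1 - (zagierMap ((x, y), (a, b))).1.1) =
      -(a.negOnePow * (a - x)) := by
  rw [Int.odd_iff] at hb
  simp only [zagierMap]
  split_ifs <;> dsimp only
  · rw [Int.negOnePow_eq_neg_of_odd_sub (n := a) (by rw [Int.odd_iff]; omega)]
    push_cast; ring
  · ring
  · rw [Int.negOnePow_eq_neg_of_odd_sub (n := a) (by rw [Int.odd_iff]; omega)]
    push_cast; ring

end zagierMap

lemma sum_negOnePow_mul_sub_quadReps_eq_zero {n : ℕ} (hn : ∀ u v : ℤ, u ^ 2 + v ^ 2 ≠ n) :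
    ∑ q ∈ quadReps n, (q.2.1.negOnePow : ℤ) * (q.2.1 - q.1.1) = 0 := by
  refine sum_eq_zero_of_involution_neg zagierMap (fun ⟨⟨x, y⟩, ⟨a, b⟩⟩ hq ↦ ?_)
    (fun ⟨⟨x, y⟩, ⟨a, b⟩⟩ hq ↦ ?_) (fun ⟨⟨x, y⟩, ⟨a, b⟩⟩ hq ↦ ?_)
  · exact zagierMap_mem_quadReps hn hq
  · obtain ⟨-, ha, hb, -⟩ := mem_quadReps.1 hq
    exact zagierMap_zagierMap ha hb
  · exact negOnePow_mul_sub_zagierMap (mem_quadReps.1 hq).2.2.2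

lemma sum_negOnePow_mul_fst_quadReps_eq_zero (n : ℕ) :
    ∑ q ∈ quadReps n, (q.2.1.negOnePow : ℤ) * q.1.1 = 0 := by
  refine sum_eq_zero_of_involution_neg (fun q ↦ ((-q.1.1, q.1.2), q.2))
    (fun ⟨⟨x, y⟩, ⟨a, b⟩⟩ hq ↦ ?_) (fun _ _ ↦ by simp) (fun _ _ ↦ by simp)
  obtain ⟨h, hab⟩ := mem_quadReps.1 hq
  exact mem_quadReps.2 ⟨by rw [← h]; ring, hab⟩

theorem sum_range_rSq_mul_sigmaStar_sub_eq_zero {n : ℕ} (hn : ∀ u v : ℤ, u ^ 2 + v ^ 2 ≠ n) :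
    ∑ j ∈ range (n + 1), (rSq 2 j : ℤ) * (sigmaStar (n - j) - 4 * sigmaStarDiv (n - j) 2) = 0 := by
  simp only [sigmaStar_sub_four_mul_sigmaStarDiv_two, mul_neg, sum_neg_distrib, neg_eq_zero,
    ← sum_quadReps n fun w ↦ (w.1.negOnePow : ℤ) * w.1]
  calc ∑ q ∈ quadReps n, (q.2.1.negOnePow : ℤ) * q.2.1
      = ∑ q ∈ quadReps n, ((q.2.1.negOnePow : ℤ) * (q.2.1 - q.1.1) +
          (q.2.1.negOnePow : ℤ) * q.1.1) := sum_congr rfl fun _ _ ↦ by ring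
    _ = 0 := by
      rw [sum_add_distrib, sum_negOnePow_mul_sub_quadReps_eq_zero hn,
        sum_negOnePow_mul_fst_quadReps_eq_zero, add_zero]

lemma rSq_two_zero : rSq 2 0 = 1 := by
  rw [rSq_two_eq_card, card_eq_one]
  refine ⟨(0, 0), eq_singleton_iff_unique_mem.2 ⟨by simp [mem_sqSumReps], fun z hz ↦ ?_⟩⟩
  rw [mem_sqSumReps, Nat.cast_zero, add_eq_zero_iff_of_nonneg (sq_nonneg _) (sq_nonneg _)] at hz
  exact Prod.ext (pow_eq_zero_iff two_ne_zero |>.1 hz.1) (pow_eq_zero_iff two_ne_zero |>.1 hz.2)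

lemma Nat.Prime.sigmaStar_eq {p : ℕ} (hp : p.Prime) (hodd : Odd p) : sigmaStar p = p + 1 := by
  rw [sigmaStar, sum_filter, hp.sum_divisors, Nat.div_self hp.pos, Nat.div_one,
    if_pos odd_one, if_pos hodd, Nat.cast_one]

theorem prime_three_mod_four (p : ℕ) (hp : p.Prime) (h3 : p % 4 = 3) :
    (∑ j ∈ Finset.Icc 1 (p - 1),
        (rSq 2 j : ℤ) * (sigmaStar (p - j) - 4 * sigmaStarDiv (p - j) 2)) = -p - 1 := by
  have hsum := sum_range_rSq_mul_sigmaStar_sub_eq_zero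
    (Int.sq_add_sq_ne_of_emod_four_eq_three (n := p) (by omega))
  rw [sum_range_succ, sum_range_eq_add_Ico _ hp.pos,
    ← Icc_sub_one_right_eq_Ico_of_not_isMin (by simpa using hp.ne_zero)] at hsum
  have hσ₀ : sigmaStar 0 - 4 * sigmaStarDiv 0 2 = 0 := by simp [sigmaStar, sigmaStarDiv]
  have hσp : sigmaStar p - 4 * sigmaStarDiv p 2 = p + 1 := by
    rw [hp.sigmaStar_eq (Nat.odd_iff.2 (by omega)), sigmaStarDiv, if_neg (by omega), mul_zero,
      sub_zero]
  rw [Nat.sub_zero, Nat.sub_self, rSq_two_zero, hσ₀, hσp, Nat.cast_one, one_mul, mul_zero,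
    add_zero] at hsum
  linarith
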